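/- Let R > 0, 0 < β < π, and on the cut plane C_{R,β} = ℂ \ {R cos β + it : |t| ≥ R sin β} define r(s) = √(R² + s² - 2sR cos β) with the principal square root. Then Re[R - s cos β + r(s)] > 0 for all s ∈ C_{R,β}. -/

import Mathlib

/-- The cut plane `C_{R,β} = ℂ \ {R cos β + it : |t| ≥ R sin β}`. -/
def cutPlane (R β : ℝ) : Set ℂ :=
  {s : ℂ | ∀ t : ℝ, R * Real.sin β ≤ |t| → s ≠ (R * Real.cos β : ℂ) + t * Complex.I}

/-- `r(s) = √(R² + s² − 2sR cos β)`, principal branch. -/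
noncomputable def rfun (R β : ℝ) (s : ℂ) : ℂ :=
  ((R : ℂ) ^ 2 + s ^ 2 - 2 * s * R * Real.cos β) ^ ((1 : ℂ) / 2)

/-- `μ(s) = √k · s sin β / √(R − s cos β + r(s))`, principal branches. -/
noncomputable def mufun (k R β : ℝ) (s : ℂ) : ℂ :=
  (Real.sqrt k : ℂ) * s * Real.sin β /
    (((R : ℂ) - s * Real.cos β + rfun R β s) ^ ((1 : ℂ) / 2))

/-! Completing the square gives `r(s)² = (s - R cos β)² + (R sin β)²`. Since
`Re √w = √((|w| + Re w) / 2)`, the triangle inequality shows that adding a nonnegative real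
number to `z²` keeps the real part of the principal square root at least `|Re z|`; hence
`Re r(s) ≥ |ξ|` with `ξ = Re s - R cos β`, and
`Re (R - s cos β + r(s)) ≥ (|ξ| - ξ cos β) + R sin² β > 0`. -/

theorem Complex.abs_re_le_re_cpow_inv_two_sq_add (z : ℂ) {t : ℝ} (ht : 0 ≤ t) :
    |z.re| ≤ ((z ^ 2 + t) ^ (2⁻¹ : ℂ)).re := by
  rw [Complex.cpow_inv_two_re]
  apply Real.abs_le_sqrt
  have h : ‖z ^ 2‖ ≤ ‖z ^ 2 + t‖ + t := by
    have := norm_add_le (z ^ 2 + t) (-t)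
    rwa [add_neg_cancel_right, norm_neg, Complex.norm_real, Real.norm_of_nonneg ht] at this
  rw [norm_pow, Complex.sq_norm, Complex.normSq_apply] at h
  simp only [Complex.add_re, Complex.ofReal_re, sq, Complex.mul_re] at h ⊢
  linarith

theorem rfun_eq_cpow_sq_add_sq (R β : ℝ) (s : ℂ) :
    rfun R β s = ((s - R * Real.cos β) ^ 2 + ((R * Real.sin β) ^ 2 : ℝ)) ^ (2⁻¹ : ℂ) := by
  have h : (Real.sin β : ℂ) ^ 2 + (Real.cos β : ℂ) ^ 2 = 1 := by
    exact_mod_cast congrArg Complex.ofReal (Real.sin_sq_add_cos_sq β)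
  rw [rfun, one_div, Complex.ofReal_pow, Complex.ofReal_mul]
  congr 1
  linear_combination -(R : ℂ) ^ 2 * h

theorem re_pos_on_cutPlane (R β : ℝ) (hR : 0 < R) (hβ0 : 0 < β) (hβπ : β < Real.pi) :
    ∀ s ∈ cutPlane R β, 0 < ((R : ℂ) - s * Real.cos β + rfun R β s).re := by
  intro s _
  have hsin : 0 < Real.sin β := Real.sin_pos_of_pos_of_lt_pi hβ0 hβπ
  set ξ := s.re - R * Real.cos β
  have hsqrt : |ξ| ≤ (rfun R β s).re := by
    rw [rfun_eq_cpow_sq_add_sq]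
    convert Complex.abs_re_le_re_cpow_inv_two_sq_add (s - R * Real.cos β)
      (sq_nonneg (R * Real.sin β)) using 2
    rw [Complex.sub_re, ← Complex.ofReal_mul, Complex.ofReal_re]
  have hcos : ξ * Real.cos β ≤ |ξ| := by
    refine (le_abs_self _).trans ?_
    rw [abs_mul]
    exact mul_le_of_le_one_right (abs_nonneg _) (Real.abs_cos_le_one β)
  have hre : ((R : ℂ) - s * Real.cos β + rfun R β s).re
      = (|ξ| - ξ * Real.cos β) + R * Real.sin β ^ 2 + ((rfun R β s).re - |ξ|) := by
    simp only [ξ, Complex.add_re, Complex.sub_re, Complex.ofReal_re, Complex.mul_re,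
      Complex.ofReal_im, mul_zero, sub_zero]
    linear_combination -R * Real.sin_sq_add_cos_sq β
  rw [hre]
  have hRsin : 0 < R * Real.sin β ^ 2 := mul_pos hR (pow_pos hsin 2)
  linarith
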